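/- arXiv:2109.03949 — 3 statements merged into one kernel-verified Lean document; each statement's English description precedes it below -/
import Mathlib

section
/- Let b > p₀ + 3 and k ∈ (0,1). If R² has the Beta(1/2, (b−1−p₀)/2) distribution, then P(R² > k) ≤ (1/B(1/2,(b−1−p₀)/2)) · ((1−k)^{b−p₀−2} · log(1/k) / (b−p₀−2))^{1/2}. -/
open MeasureTheory Set

/-- The Beta function `B(x,y) = Γ(x)Γ(y)/Γ(x+y)`. -/
noncomputable def betaFun (x y : ℝ) : ℝ := Real.Gamma x * Real.Gamma y / Real.Gamma (x + y)

/-- The Beta(a,b) probability measure on ℝ, given by its density on (0,1). -/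
noncomputable def betaMeasure (a b : ℝ) : Measure ℝ :=
  volume.withDensity fun x =>
    ENNReal.ofReal (if 0 < x ∧ x < 1 then x ^ (a - 1) * (1 - x) ^ (b - 1) / betaFun a b else 0)

/-!
On `(k, 1)` the Beta(1/2, β) density is `x^(-1/2) (1 - x)^(β - 1) / B(1/2, β)`. By Cauchy–Schwarz
its integral is at most the geometric mean of `∫ₖ¹ x⁻¹ = log (1/k)` and
`∫ₖ¹ (1 - x)^(2β - 2) = (1 - k)^(2β - 1) / (2β - 1)`, the latter finite as soon as `β > 1/2`.
-/

lemma betaFun_pos {x y : ℝ} (hx : 0 < x) (hy : 0 < y) : 0 < betaFun x y :=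
  div_pos (mul_pos (Real.Gamma_pos_of_pos hx) (Real.Gamma_pos_of_pos hy))
    (Real.Gamma_pos_of_pos (add_pos hx hy))

lemma betaMeasure_Ioi {a b k : ℝ} (hk : 0 ≤ k) :
    betaMeasure a b (Ioi k) =
      (∫⁻ x in Ioo k 1, ENNReal.ofReal (x ^ (a - 1) * (1 - x) ^ (b - 1))) *
        ENNReal.ofReal (betaFun a b)⁻¹ := by
  have hIoo : Ioo k 1 = Ioo 0 1 ∩ Ioi k := by
    rw [inter_comm, Ioi_inter_Ioo, max_eq_left hk]
  rw [betaMeasure, withDensity_apply _ measurableSet_Ioi,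
    ← lintegral_mul_const' _ _ ENNReal.ofReal_ne_top, hIoo,
    ← setLIntegral_indicator measurableSet_Ioo]
  refine setLIntegral_congr_fun measurableSet_Ioi fun x _ => ?_
  by_cases hx : x ∈ Ioo (0 : ℝ) 1
  · have hdens : 0 ≤ x ^ (a - 1) * (1 - x) ^ (b - 1) :=
      mul_nonneg (Real.rpow_nonneg hx.1.le _) (Real.rpow_nonneg (sub_nonneg.2 hx.2.le) _)
    rw [indicator_of_mem hx, if_pos (show 0 < x ∧ x < 1 from hx), div_eq_mul_inv,
      ENNReal.ofReal_mul hdens]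
  · rw [indicator_of_notMem hx, if_neg (show ¬(0 < x ∧ x < 1) from hx), ENNReal.ofReal_zero]

lemma ENNReal.lintegral_ofReal_mul_le {α : Type*} [MeasurableSpace α] {μ : Measure α}
    {f g : α → ℝ} (hf : AEMeasurable f μ) (hg : AEMeasurable g μ)
    (hf₀ : 0 ≤ᵐ[μ] f) (hg₀ : 0 ≤ᵐ[μ] g) :
    ∫⁻ a, ENNReal.ofReal (f a * g a) ∂μ ≤
      (∫⁻ a, ENNReal.ofReal (f a ^ 2) ∂μ) ^ (1 / 2 : ℝ) *
        (∫⁻ a, ENNReal.ofReal (g a ^ 2) ∂μ) ^ (1 / 2 : ℝ) := by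
  have sq {h : α → ℝ} (h₀ : 0 ≤ᵐ[μ] h) :
      ∫⁻ a, ENNReal.ofReal (h a ^ 2) ∂μ = ∫⁻ a, ENNReal.ofReal (h a) ^ (2 : ℝ) ∂μ := by
    refine lintegral_congr_ae (h₀.mono fun a ha => ?_)
    dsimp only
    rw [ENNReal.ofReal_rpow_of_nonneg ha zero_le_two, Real.rpow_two]
  have prod : ∫⁻ a, ENNReal.ofReal (f a * g a) ∂μ =
      ∫⁻ a, ((fun a => ENNReal.ofReal (f a)) * fun a => ENNReal.ofReal (g a)) a ∂μ :=
    lintegral_congr_ae (hf₀.mono fun a ha => ENNReal.ofReal_mul ha)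
  rw [sq hf₀, sq hg₀, prod]
  exact ENNReal.lintegral_mul_le_Lp_mul_Lq μ Real.HolderConjugate.two_two
    hf.ennreal_ofReal hg.ennreal_ofReal

lemma lintegral_inv_Ioo {a b : ℝ} (ha : 0 < a) (hab : a ≤ b) :
    ∫⁻ x in Ioo a b, ENNReal.ofReal x⁻¹ = ENNReal.ofReal (Real.log (b / a)) := by
  have hint : IntegrableOn (fun x : ℝ => x⁻¹) (Ioo a b) :=
    ((continuousOn_inv₀.mono fun x hx => (ha.trans_le hx.1).ne').integrableOn_Icc).mono_set
      Ioo_subset_Icc_self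
  rw [← ofReal_integral_eq_lintegral_ofReal hint
    ((ae_restrict_mem measurableSet_Ioo).mono fun x hx => inv_nonneg.mpr (ha.trans hx.1).le),
    ← integral_Ioc_eq_integral_Ioo, ← intervalIntegral.integral_of_le hab,
    integral_inv_of_pos ha (ha.trans_le hab)]

lemma lintegral_one_sub_rpow_Ioo {c k : ℝ} (hc : 0 < c) (hk : k ≤ 1) :
    ∫⁻ x in Ioo k 1, ENNReal.ofReal ((1 - x) ^ (c - 1)) = ENNReal.ofReal ((1 - k) ^ c / c) := by
  have hint : IntegrableOn (fun x : ℝ => (1 - x) ^ (c - 1)) (Ioo k 1) := by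
    refine (intervalIntegrable_iff_integrableOn_Ioo_of_le hk).mp ?_
    simpa using (intervalIntegral.intervalIntegrable_rpow' (a := 1 - k) (b := 0)
      (r := c - 1) (by linarith)).comp_sub_left 1
  rw [← ofReal_integral_eq_lintegral_ofReal hint
    ((ae_restrict_mem measurableSet_Ioo).mono fun x hx =>
      Real.rpow_nonneg (sub_nonneg.2 hx.2.le) _),
    ← integral_Ioc_eq_integral_Ioo, ← intervalIntegral.integral_of_le hk,
    intervalIntegral.integral_comp_sub_left (fun x : ℝ => x ^ (c - 1)), sub_self,
    integral_rpow (Or.inl (by linarith)), sub_add_cancel, Real.zero_rpow hc.ne', sub_zero]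

lemma lintegral_rpow_neg_half_mul_one_sub_rpow_le {β k : ℝ} (hβ : 1 / 2 < β) (hk₀ : 0 < k)
    (hk₁ : k ≤ 1) :
    ∫⁻ x in Ioo k 1, ENNReal.ofReal (x ^ ((1 : ℝ) / 2 - 1) * (1 - x) ^ (β - 1)) ≤
      ENNReal.ofReal (Real.log (1 / k) * ((1 - k) ^ (2 * β - 1) / (2 * β - 1))) ^ (1 / 2 : ℝ) := by
  have hsq₁ : ∀ x ∈ Ioo k 1, ENNReal.ofReal ((x ^ ((1 : ℝ) / 2 - 1)) ^ 2) = ENNReal.ofReal x⁻¹ :=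
    fun x hx => by
      rw [← Real.rpow_mul_natCast (hk₀.trans hx.1).le]
      norm_num [Real.rpow_neg_one]
  have hsq₂ : ∀ x ∈ Ioo k 1,
      ENNReal.ofReal (((1 - x) ^ (β - 1)) ^ 2) = ENNReal.ofReal ((1 - x) ^ (2 * β - 1 - 1)) :=
    fun x hx => by
      rw [← Real.rpow_mul_natCast (sub_nonneg.2 hx.2.le)]
      ring_nf
  have hlog : 0 ≤ Real.log (1 / k) := Real.log_nonneg (one_le_one_div hk₀ hk₁)
  calc ∫⁻ x in Ioo k 1, ENNReal.ofReal (x ^ ((1 : ℝ) / 2 - 1) * (1 - x) ^ (β - 1))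
      ≤ (∫⁻ x in Ioo k 1, ENNReal.ofReal ((x ^ ((1 : ℝ) / 2 - 1)) ^ 2)) ^ (1 / 2 : ℝ) *
          (∫⁻ x in Ioo k 1, ENNReal.ofReal (((1 - x) ^ (β - 1)) ^ 2)) ^ (1 / 2 : ℝ) :=
        ENNReal.lintegral_ofReal_mul_le (by fun_prop) (by fun_prop)
          ((ae_restrict_mem measurableSet_Ioo).mono fun x hx =>
            Real.rpow_nonneg (hk₀.trans hx.1).le _)
          ((ae_restrict_mem measurableSet_Ioo).mono fun x hx =>
            Real.rpow_nonneg (sub_nonneg.2 hx.2.le) _)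
    _ = ENNReal.ofReal (Real.log (1 / k)) ^ (1 / 2 : ℝ) *
          ENNReal.ofReal ((1 - k) ^ (2 * β - 1) / (2 * β - 1)) ^ (1 / 2 : ℝ) := by
        rw [setLIntegral_congr_fun measurableSet_Ioo hsq₁,
          setLIntegral_congr_fun measurableSet_Ioo hsq₂, lintegral_inv_Ioo hk₀ hk₁,
          lintegral_one_sub_rpow_Ioo (by linarith) hk₁]
    _ = _ := by
        rw [ENNReal.ofReal_mul hlog, ENNReal.mul_rpow_of_nonneg _ _ (by norm_num)]

theorem betaMeasure_half_Ioi_toReal_le {β k : ℝ} (hβ : 1 / 2 < β) (hk : k ∈ Ioo (0 : ℝ) 1) :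
    (betaMeasure (1 / 2) β (Ioi k)).toReal ≤
      1 / betaFun (1 / 2) β *
        ((1 - k) ^ (2 * β - 1) * Real.log (1 / k) / (2 * β - 1)) ^ (1 / 2 : ℝ) := by
  have hB : 0 < betaFun (1 / 2) β := betaFun_pos (by norm_num) (by linarith)
  have hlog : 0 ≤ Real.log (1 / k) := Real.log_nonneg (one_le_one_div hk.1 hk.2.le)
  have hM : 0 ≤ (1 - k) ^ (2 * β - 1) / (2 * β - 1) :=
    div_nonneg (Real.rpow_nonneg (sub_nonneg.2 hk.2.le) _) (by linarith)
  refine ENNReal.toReal_le_of_le_ofReal (mul_nonneg (one_div_nonneg.2 hB.le)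
    (Real.rpow_nonneg (by rw [mul_div_right_comm]; exact mul_nonneg hM hlog) _)) ?_
  rw [betaMeasure_Ioi hk.1.le]
  calc _ ≤ ENNReal.ofReal (Real.log (1 / k) * ((1 - k) ^ (2 * β - 1) / (2 * β - 1))) ^ (1 / 2 : ℝ) *
          ENNReal.ofReal (betaFun (1 / 2) β)⁻¹ :=
        mul_le_mul_left (lintegral_rpow_neg_half_mul_one_sub_rpow_le hβ hk.1 hk.2.le) _
    _ = _ := by
        rw [ENNReal.ofReal_rpow_of_nonneg (mul_nonneg hlog hM) (by norm_num),
          ← ENNReal.ofReal_mul (by positivity), mul_comm, one_div (betaFun _ _)]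
        congr 3
        ring

/-- If `R² ~ Beta(1/2, (b−1−p₀)/2)` with `b > p₀ + 3`, then for `k ∈ (0,1)`,
`P(R² > k) ≤ (1/B(1/2,(b−1−p₀)/2)) ((1−k)^{b−p₀−2} log(1/k)/(b−p₀−2))^{1/2}`. -/
theorem stmt_1 (p₀ : ℕ) (b : ℝ) (hb : (p₀ : ℝ) + 3 < b) (k : ℝ) (hk : k ∈ Set.Ioo (0 : ℝ) 1) :
    (betaMeasure (1 / 2) ((b - 1 - p₀) / 2) (Set.Ioi k)).toReal ≤
      (1 / betaFun (1 / 2) ((b - 1 - (p₀ : ℝ)) / 2)) *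
        ((1 - k) ^ (b - (p₀ : ℝ) - 2) * Real.log (1 / k) / (b - (p₀ : ℝ) - 2)) ^ ((1 : ℝ) / 2) := by
  have hβ : 1 / 2 < (b - 1 - p₀) / 2 := by linarith
  have hexp : 2 * ((b - 1 - p₀) / 2) - 1 = b - p₀ - 2 := by ring
  simpa only [hexp] using betaMeasure_half_Ioi_toReal_le hβ hk
end

section
/- For positive reals x, y, the reciprocal of the Beta function satisfies 1/B(x,y) ≤ (x+y)^{x+y−1} / (x^{x−1} · y^{y−1}). -/
/-!
Put `g t = t^x (1-t)^y`, so that `g' t = (x - (x+y) t) t^(x-1) (1-t)^(y-1)`. For `0 < c < 1` the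
factor `x - (x+y) t` is at most `x` on `[0, c]`, and its negative is at most `y` on `[c, 1]`;
since `g` vanishes at `0` and `1`, integrating `g'` gives `g c ≤ x ∫₀^c` and `g c ≤ y ∫_c^1` of the
Beta integrand. Hence `B(x,y) ≥ g c (1/x + 1/y)`, which at `c = x/(x+y)` is the claimed bound.
-/

open Real Set intervalIntegral

lemma betaFun_eq_integral {x y : ℝ} (hx : 0 < x) (hy : 0 < y) :
    betaFun x y = ∫ t in (0 : ℝ)..1, t ^ (x - 1) * (1 - t) ^ (y - 1) := by
  have hcomplex := Complex.Gamma_mul_Gamma_eq_betaIntegral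
    (s := (x : ℂ)) (t := (y : ℂ)) (by simpa using hx) (by simpa using hy)
  have hbeta : Complex.betaIntegral x y =
      ((∫ t in (0 : ℝ)..1, t ^ (x - 1) * (1 - t) ^ (y - 1) : ℝ) : ℂ) := by
    rw [Complex.betaIntegral, ← integral_ofReal]
    refine integral_congr fun t ht => ?_
    rw [uIcc_of_le zero_le_one] at ht
    push_cast
    rw [Complex.ofReal_cpow ht.1, Complex.ofReal_cpow (sub_nonneg.mpr ht.2)]
    push_cast
    ring
  rw [hbeta, ← Complex.ofReal_add, Complex.Gamma_ofReal, Complex.Gamma_ofReal,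
    Complex.Gamma_ofReal] at hcomplex
  have hreal : Gamma x * Gamma y =
      Gamma (x + y) * ∫ t in (0 : ℝ)..1, t ^ (x - 1) * (1 - t) ^ (y - 1) := by
    exact_mod_cast hcomplex
  rw [betaFun, hreal, mul_div_cancel_left₀ _ (Gamma_pos_of_pos (add_pos hx hy)).ne']

lemma intervalIntegrable_betaIntegrand {x y c : ℝ} (hx : 0 < x) (hc : c < 1) :
    IntervalIntegrable (fun t : ℝ => t ^ (x - 1) * (1 - t) ^ (y - 1))
      MeasureTheory.volume 0 c := by
  refine (intervalIntegrable_rpow' (by linarith)).mul_continuousOn ?_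
  refine ContinuousOn.rpow_const (by fun_prop) fun t ht => Or.inl ?_
  have : t ≤ max 0 c := ht.2
  have : max 0 c < 1 := max_lt one_pos hc
  linarith

lemma integral_betaIntegrand_comp_one_sub (x y a b : ℝ) :
    ∫ t in a..b, t ^ (x - 1) * (1 - t) ^ (y - 1) =
      ∫ t in (1 - b)..(1 - a), t ^ (y - 1) * (1 - t) ^ (x - 1) := by
  rw [← integral_comp_sub_left]
  simp only [sub_sub_cancel, mul_comm]

lemma integral_sub_mul_betaIntegrand_eq {x y c : ℝ} (hx : 0 < x) (hy : 0 ≤ y) (hc0 : 0 ≤ c)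
    (hc1 : c < 1) :
    ∫ t in (0 : ℝ)..c, (x - (x + y) * t) * (t ^ (x - 1) * (1 - t) ^ (y - 1)) =
      c ^ x * (1 - c) ^ y := by
  rw [integral_eq_sub_of_hasDerivAt_of_le hc0 (f := fun t => t ^ x * (1 - t) ^ y)]
  · simp [zero_rpow hx.ne']
  · exact (Continuous.mul (continuous_rpow_const hx.le) ((continuous_rpow_const hy).comp
      (continuous_sub_left 1))).continuousOn
  · intro t ht
    have ht0 : 0 < t := ht.1
    have ht1 : 0 < 1 - t := by linarith [ht.2]
    have hpow : HasDerivAt (fun t => t ^ x) (x * t ^ (x - 1)) t :=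
      hasDerivAt_rpow_const (Or.inl ht0.ne')
    have hpow' : HasDerivAt (fun t => (1 - t) ^ y) (-1 * y * (1 - t) ^ (y - 1)) t :=
      ((hasDerivAt_id' t).const_sub 1).rpow_const (Or.inl ht1.ne')
    refine (hpow.mul hpow').congr_deriv ?_
    have e1 : t ^ x = t ^ (x - 1) * t := by rw [← rpow_add_one ht0.ne', sub_add_cancel]
    have e2 : (1 - t) ^ y = (1 - t) ^ (y - 1) * (1 - t) := by
      rw [← rpow_add_one ht1.ne', sub_add_cancel]
    rw [e1, e2]
    ring
  · exact (intervalIntegrable_betaIntegrand hx hc1).continuousOn_mul (by fun_prop)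

lemma rpow_mul_one_sub_rpow_le_mul_integral {x y c : ℝ} (hx : 0 < x) (hy : 0 ≤ y)
    (hc0 : 0 ≤ c) (hc1 : c < 1) :
    c ^ x * (1 - c) ^ y ≤ x * ∫ t in (0 : ℝ)..c, t ^ (x - 1) * (1 - t) ^ (y - 1) := by
  rw [← integral_sub_mul_betaIntegrand_eq hx hy hc0 hc1, ← integral_const_mul]
  refine integral_mono_on hc0 ((intervalIntegrable_betaIntegrand hx hc1).continuousOn_mul
    (by fun_prop)) ((intervalIntegrable_betaIntegrand hx hc1).const_mul x) fun t ht => ?_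
  have : 0 ≤ t ^ (x - 1) * (1 - t) ^ (y - 1) :=
    mul_nonneg (rpow_nonneg ht.1 _) (rpow_nonneg (by linarith [ht.2]) _)
  have : 0 ≤ (x + y) * t := mul_nonneg (by linarith) ht.1
  nlinarith

lemma rpow_mul_one_sub_rpow_mul_le_integral {x y c : ℝ} (hx : 0 < x) (hy : 0 < y) (hc0 : 0 < c)
    (hc1 : c < 1) :
    c ^ x * (1 - c) ^ y * (1 / x + 1 / y) ≤
      ∫ t in (0 : ℝ)..1, t ^ (x - 1) * (1 - t) ^ (y - 1) := by
  have hleft := rpow_mul_one_sub_rpow_le_mul_integral hx hy.le hc0.le hc1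
  have hright :=
    rpow_mul_one_sub_rpow_le_mul_integral hy hx.le (by linarith) (by linarith : 1 - c < 1)
  rw [integral_betaIntegrand_comp_one_sub, sub_sub_cancel, sub_zero] at hright
  have hint_left := intervalIntegrable_betaIntegrand (y := y) hx hc1
  have hint_right : IntervalIntegrable (fun t : ℝ => t ^ (x - 1) * (1 - t) ^ (y - 1))
      MeasureTheory.volume c 1 := by
    have := (intervalIntegrable_betaIntegrand (x := y) (y := x) hy
      (by linarith : 1 - c < 1)).comp_sub_left 1
    simpa [mul_comm] using this.symm
  rw [← integral_add_adjacent_intervals hint_left hint_right, mul_add, mul_one_div, mul_one_div]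
  gcongr
  · exact (div_le_iff₀' hx).2 hleft
  · exact (div_le_iff₀' hy).2 (mul_comm (c ^ x) _ ▸ hright)

lemma rpow_mul_rpow_div_rpow_le_betaFun {x y : ℝ} (hx : 0 < x) (hy : 0 < y) :
    x ^ (x - 1) * y ^ (y - 1) / (x + y) ^ (x + y - 1) ≤ betaFun x y := by
  have hs : 0 < x + y := add_pos hx hy
  have hc1 : x / (x + y) < 1 := (div_lt_one hs).2 (by linarith)
  have h1c : 1 - x / (x + y) = y / (x + y) := by field_simp; ring
  have hbound := rpow_mul_one_sub_rpow_mul_le_integral hx hy (by positivity) hc1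
  rw [← betaFun_eq_integral hx hy, h1c, div_rpow hx.le hs.le, div_rpow hy.le hs.le] at hbound
  convert hbound using 1
  rw [rpow_sub_one hx.ne', rpow_sub_one hy.ne', rpow_sub_one hs.ne', rpow_add hs]
  field_simp
  ring

/-- For `x, y > 0`, `1/B(x,y) ≤ (x+y)^{x+y−1}/(x^{x−1} y^{y−1})`. -/
theorem stmt_3 (x y : ℝ) (hx : 0 < x) (hy : 0 < y) :
    1 / betaFun x y ≤ (x + y) ^ (x + y - 1) / (x ^ (x - 1) * y ^ (y - 1)) :=
  (one_div_le_one_div_of_le (by positivity) (rpow_mul_rpow_div_rpow_le_betaFun hx hy)).trans_eq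
    (one_div_div _ _)
end

section
/- Let Y ~ χ²_n be a (central) chi-square random variable with n degrees of freedom. Then for any x ≥ 0, P(Y ≥ n + 2√(nx) + 2x) ≤ exp(−x). -/
/-!
Chernoff's method (Laurent–Massart). For `0 ≤ t < 1/2` the moment generating function of the
square of a standard Gaussian is `(1 - 2t)^(-1/2) ≤ exp (t + t² / (1 - 2t))`, so by independence
`P(Y ≥ a) ≤ exp (-t a + n (t + t² / (1 - 2t)))`. For `a = n + 2√(nx) + 2x` the choice
`t = √x / (√n + 2√x)` makes this exponent exactly `-x`.
-/

open MeasureTheory ProbabilityTheory Real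

/-- For `t ≥ 1/2` both sides are junk zeros: the integrand is not integrable and `√` of a
nonpositive number is `0`. -/
lemma mgf_sq_gaussianReal (t : ℝ) :
    mgf (fun y ↦ y ^ 2) (gaussianReal 0 1) t = (√(1 - 2 * t))⁻¹ := by
  have hdensity : ∀ y : ℝ, gaussianPDFReal 0 1 y • exp (t * y ^ 2)
      = (√(2 * π))⁻¹ * exp (-(1 / 2 - t) * y ^ 2) := fun y ↦ by
    rw [gaussianPDFReal, smul_eq_mul, mul_assoc, ← exp_add]
    congr 2
    · simp
    · push_cast; ring
  rw [mgf, integral_gaussianReal_eq_integral_smul one_ne_zero]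
  simp only [hdensity]
  rw [integral_const_mul, integral_gaussian, ← sqrt_inv, ← sqrt_inv,
    ← sqrt_mul (by positivity)]
  congr 1
  field_simp

lemma inv_sqrt_one_sub_two_mul_le_exp {t : ℝ} (h0 : 0 ≤ t) (h1 : t < 1 / 2) :
    (√(1 - 2 * t))⁻¹ ≤ exp (t + t ^ 2 / (1 - 2 * t)) := by
  have hpos : 0 < 1 - 2 * t := by linarith
  set c := t + t ^ 2 / (1 - 2 * t)
  have hc : (1 - 2 * t) * c = t * (1 - t) := by simp only [c]; field_simp; ring
  have hc0 : 0 ≤ c := by positivity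
  have hsq : 1 ≤ (1 - 2 * t) * exp c ^ 2 := calc
    -- by `hc`, the right-hand side equals `1 + 2 t⁴ / (1 - 2t)`
    1 ≤ (1 - 2 * t) * (1 + 2 * c + (2 * c) ^ 2 / 2) := by nlinarith [sq_nonneg (t ^ 2)]
    _ ≤ (1 - 2 * t) * exp c ^ 2 := by
      rw [← exp_nat_mul]
      gcongr
      simpa using quadratic_le_exp_of_nonneg (by positivity : 0 ≤ 2 * c)
  rw [inv_le_iff_one_le_mul₀ (sqrt_pos.2 hpos)]
  calc (1 : ℝ) ≤ √((1 - 2 * t) * exp c ^ 2) := by simpa using sqrt_le_sqrt hsq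
    _ = exp c * √(1 - 2 * t) := by rw [sqrt_mul hpos.le, sqrt_sq (exp_pos c).le, mul_comm]

lemma measureReal_le_sum_sq_le_exp {Ω ι : Type*} [MeasurableSpace Ω] {μ : Measure Ω}
    [IsProbabilityMeasure μ] [Fintype ι] {Z : ι → Ω → ℝ} (hInd : iIndepFun Z μ)
    (hZ : ∀ i, μ.map (Z i) = gaussianReal 0 1) {t : ℝ} (ht0 : 0 ≤ t) (ht : t < 1 / 2)
    (a : ℝ) :
    μ.real {ω | a ≤ ∑ i, Z i ω ^ 2}
      ≤ exp (-t * a + Fintype.card ι * (t + t ^ 2 / (1 - 2 * t))) := by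
  have hZm : ∀ i, AEMeasurable (Z i) μ :=
    fun i ↦ .of_map_ne_zero (hZ i ▸ IsProbabilityMeasure.ne_zero _)
  set X : ι → Ω → ℝ := fun i ω ↦ Z i ω ^ 2
  have hXind : iIndepFun X μ := hInd.comp (fun _ y ↦ y ^ 2) fun _ ↦ by fun_prop
  have hmgf : mgf (∑ i, X i) μ t = (√(1 - 2 * t))⁻¹ ^ Fintype.card ι := by
    have hX : ∀ i, mgf (X i) μ t = (√(1 - 2 * t))⁻¹ := fun i ↦ by
      rw [← mgf_sq_gaussianReal, ← hZ i, mgf_map (hZm i) (by fun_prop)]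
      rfl
    rw [hXind.mgf_sum₀ (fun i ↦ (hZm i).pow_const 2), Finset.prod_congr rfl fun i _ ↦ hX i,
      Finset.prod_const, Finset.card_univ]
  have hint : Integrable (fun ω ↦ exp (t * (∑ i, X i) ω)) μ :=
    mgf_pos_iff.1 (hmgf ▸ pow_pos (inv_pos.2 (sqrt_pos.2 (by linarith))) _)
  calc μ.real {ω | a ≤ ∑ i, Z i ω ^ 2} = μ.real {ω | a ≤ (∑ i, X i) ω} := by
        simp only [X, Finset.sum_apply]
    _ ≤ exp (-t * a) * mgf (∑ i, X i) μ t := measure_ge_le_exp_mul_mgf a ht0 hint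
    _ ≤ exp (-t * a) * exp (t + t ^ 2 / (1 - 2 * t)) ^ Fintype.card ι := by
        rw [hmgf]
        gcongr
        exact inv_sqrt_one_sub_two_mul_le_exp ht0 ht
    _ = exp (-t * a + Fintype.card ι * (t + t ^ 2 / (1 - 2 * t))) := by
        rw [← exp_nat_mul, ← exp_add]

lemma chiSq_chernoff_exponent {s r t : ℝ} (hs : 0 < s) (hr : 0 ≤ r) (ht : t = r / (s + 2 * r)) :
    -t * (s ^ 2 + 2 * (s * r) + 2 * r ^ 2) + s ^ 2 * (t + t ^ 2 / (1 - 2 * t)) = -r ^ 2 := by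
  have hden : s + 2 * r ≠ 0 := by positivity
  have h : 1 - 2 * t = s / (s + 2 * r) := by rw [ht]; field_simp; ring
  rw [h, ht]
  field_simp
  ring

/-- Upper tail bound for a central chi-square variable `Y = ∑ Zᵢ²` with `Zᵢ` i.i.d. standard
normals: `P(Y ≥ n + 2√(nx) + 2x) ≤ exp(−x)` for `x ≥ 0`. -/
theorem stmt_11 {Ω : Type*} [MeasurableSpace Ω] (μ : Measure Ω) [IsProbabilityMeasure μ]
    (n : ℕ) (Z : Fin n → Ω → ℝ)
    (hInd : iIndepFun Z μ)
    (hZ : ∀ i, Measure.map (Z i) μ = gaussianReal 0 1)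
    (x : ℝ) (hx : 0 ≤ x) :
    (μ {ω | (n : ℝ) + 2 * Real.sqrt ((n : ℝ) * x) + 2 * x ≤ ∑ i, (Z i ω) ^ 2}).toReal ≤
      Real.exp (-x) := by
  obtain rfl | hn := n.eq_zero_or_pos
  · rcases hx.eq_or_lt with rfl | hx0
    · simp
    · have : ¬2 * x ≤ 0 := by linarith
      simp [this, exp_nonneg]
  have hs : 0 < √(n : ℝ) := sqrt_pos.2 (by exact_mod_cast hn)
  have ht0 : 0 ≤ √x / (√n + 2 * √x) := by positivity
  have ht1 : √x / (√n + 2 * √x) < 1 / 2 := by rw [div_lt_iff₀ (by positivity)]; linarith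
  have hexp := chiSq_chernoff_exponent hs (sqrt_nonneg x) rfl
  rw [sq_sqrt n.cast_nonneg, sq_sqrt hx] at hexp
  calc _ ≤ _ := measureReal_le_sum_sq_le_exp hInd hZ ht0 ht1 _
    _ = exp (-x) := by rw [Fintype.card_fin, sqrt_mul n.cast_nonneg, hexp]
end
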